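/- Let H = ℓ² ⊕₂ L²[0,1] be the Hilbert lattice direct sum, and let C be the operator on H given by C(x, f) = (x, 0) (the band projection onto the ℓ² component). Then C is a self-commutator of a positive operator: there exists a positive bounded linear operator A on H such that C = A*A − AA*. -/

import Mathlib

open MeasureTheory ContinuousLinearMap

/-- An element of the Hilbert lattice `ℓ² ⊕₂ L²[0,1]` is positive iff its `ℓ²` component is
coordinatewise nonnegative and its `L²[0,1]` component is a.e. nonnegative. -/
def IsPosPairL2 (z : WithLp 2
    ((lp (fun _ : ℕ => ℝ) 2) × (Lp ℝ 2 (volume : Measure (Set.Icc (0:ℝ) 1))))) : Prop :=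
  (∀ n, 0 ≤ (WithLp.equiv 2 _ z).1 n) ∧ 0 ≤ (WithLp.equiv 2 _ z).2

/-!
Let `Φ : ℓ² → L²[0,1]` be the synthesis isometry along normalized indicators of disjoint dyadic
intervals, so that both `Φ` and `Φ*` are positive, and let `U : ℓ² ⊕₂ ℓ² → ℓ²` be the interleaving
unitary, which is a lattice isomorphism. Then `A (x, f) = (0, Φ (U (x, Φ* f)))` is positive, and
`Φ* Φ = 1` together with `U* = U⁻¹` give `A* A (x, f) = (x, Φ Φ* f)` and
`A A* (x, f) = (0, Φ Φ* f)`.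
-/

open scoped InnerProductSpace ENNReal Function

noncomputable section

section BandShift

variable {𝕜 E F : Type*} [RCLike 𝕜]
  [NormedAddCommGroup E] [InnerProductSpace 𝕜 E] [CompleteSpace E]
  [NormedAddCommGroup F] [InnerProductSpace 𝕜 F] [CompleteSpace F]

def bandShift (Φ : E →L[𝕜] F) (U : WithLp 2 (E × E) ≃ₗᵢ[𝕜] E) :
    WithLp 2 (E × F) →L[𝕜] WithLp 2 (E × F) :=
  (WithLp.prodContinuousLinearEquiv 2 𝕜 E F).symm.toContinuousLinearMap ∘L
    (0 : WithLp 2 (E × F) →L[𝕜] E).prod (Φ ∘L U.toContinuousLinearEquiv.toContinuousLinearMap ∘L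
      (WithLp.prodContinuousLinearEquiv 2 𝕜 E E).symm.toContinuousLinearMap ∘L
      (WithLp.fstL 2 𝕜 E F).prod (adjoint Φ ∘L WithLp.sndL 2 𝕜 E F))

variable (Φ : E →L[𝕜] F) (U : WithLp 2 (E × E) ≃ₗᵢ[𝕜] E)

theorem bandShift_apply (z : WithLp 2 (E × F)) :
    bandShift Φ U z = WithLp.toLp 2 (0, Φ (U (WithLp.toLp 2 (z.fst, adjoint Φ z.snd)))) :=
  rfl

theorem adjoint_bandShift_apply (z : WithLp 2 (E × F)) :
    adjoint (bandShift Φ U) z = WithLp.toLp 2 ((U.symm (adjoint Φ z.snd)).fst,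
      Φ (U.symm (adjoint Φ z.snd)).snd) := by
  refine ext_inner_right 𝕜 fun w => ?_
  calc ⟪adjoint (bandShift Φ U) z, w⟫_𝕜
      = ⟪z.snd, Φ (U (WithLp.toLp 2 (w.fst, adjoint Φ w.snd)))⟫_𝕜 := by
        simp [adjoint_inner_left, bandShift_apply]
    _ = ⟪U.symm (adjoint Φ z.snd), WithLp.toLp 2 (w.fst, adjoint Φ w.snd)⟫_𝕜 := by
        rw [← adjoint_inner_left, ← U.inner_map_map, U.apply_symm_apply]
    _ = _ := by
        simp [adjoint_inner_right]

theorem adjoint_comp_bandShift_sub_bandShift_comp_adjoint_apply (hΦ : adjoint Φ ∘L Φ = 1)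
    (z : WithLp 2 (E × F)) :
    (adjoint (bandShift Φ U) ∘L bandShift Φ U - bandShift Φ U ∘L adjoint (bandShift Φ U)) z =
      WithLp.toLp 2 (z.fst, 0) := by
  have hΦ' (x : E) : adjoint Φ (Φ x) = x := congr($hΦ x)
  have hprod (c : WithLp 2 (E × E)) : WithLp.toLp 2 (c.fst, c.snd) = c := rfl
  refine WithLp.ofLp_injective 2 (Prod.ext ?_ ?_) <;>
    simp [adjoint_bandShift_apply, bandShift_apply, hΦ', hprod]

end BandShift

namespace Nat

variable {α : Type*}

def interleave (x y : ℕ → α) (n : ℕ) : α :=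
  if Even n then x (n / 2) else y (n / 2)

@[simp]
theorem interleave_two_mul (x y : ℕ → α) (k : ℕ) : interleave x y (2 * k) = x k := by
  simp [interleave]

@[simp]
theorem interleave_two_mul_add_one (x y : ℕ → α) (k : ℕ) : interleave x y (2 * k + 1) = y k := by
  simp [interleave, Nat.mul_add_div]

theorem interleave_add [Add α] (x y x' y' : ℕ → α) :
    interleave (x + x') (y + y') = interleave x y + interleave x' y' := by
  ext n; by_cases h : Even n <;> simp [interleave, h]

theorem interleave_nonneg [Zero α] [Preorder α] {x y : ℕ → α} (hx : 0 ≤ x) (hy : 0 ≤ y) :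
    0 ≤ interleave x y := fun n => by
  unfold interleave
  split_ifs
  exacts [hx (n / 2), hy (n / 2)]

theorem interleave_smul {R : Type*} [SMul R α] (c : R) (x y : ℕ → α) :
    interleave (c • x) (c • y) = c • interleave x y := by
  ext n; by_cases h : Even n <;> simp [interleave, h]

end Nat

namespace lp

variable {𝕜 E : Type*} [NormedField 𝕜] [NormedAddCommGroup E] [NormedSpace 𝕜 E]

theorem hasSum_norm_sq_interleave (x y : lp (fun _ : ℕ => E) 2) :
    HasSum (fun n => ‖Nat.interleave ⇑x ⇑y n‖ ^ (2 : ℝ≥0∞).toReal)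
      (‖x‖ ^ (2 : ℝ≥0∞).toReal + ‖y‖ ^ (2 : ℝ≥0∞).toReal) :=
  .even_add_odd (by simpa using hasSum_norm (by simp) x) (by simpa using hasSum_norm (by simp) y)

theorem memℓp_interleave (x y : lp (fun _ : ℕ => E) 2) : Memℓp (Nat.interleave ⇑x ⇑y) 2 :=
  memℓp_gen (hasSum_norm_sq_interleave x y).summable

theorem memℓp_comp_two_mul (x : lp (fun _ : ℕ => E) 2) : Memℓp (fun k => x (2 * k)) 2 :=
  memℓp_gen (((lp.memℓp x).summable (by simp)).comp_injective fun _ _ h => by omega)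

theorem memℓp_comp_two_mul_add_one (x : lp (fun _ : ℕ => E) 2) :
    Memℓp (fun k => x (2 * k + 1)) 2 :=
  memℓp_gen (((lp.memℓp x).summable (by simp)).comp_injective fun _ _ h => by omega)

def interleave :
    WithLp 2 (lp (fun _ : ℕ => E) 2 × lp (fun _ : ℕ => E) 2) ≃ₗᵢ[𝕜] lp (fun _ : ℕ => E) 2 where
  toFun z := ⟨Nat.interleave ⇑z.fst ⇑z.snd, memℓp_interleave z.fst z.snd⟩
  invFun x := WithLp.toLp 2 (⟨_, memℓp_comp_two_mul x⟩, ⟨_, memℓp_comp_two_mul_add_one x⟩)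
  map_add' z w := lp.ext (Nat.interleave_add _ _ _ _)
  map_smul' c z := lp.ext (Nat.interleave_smul c _ _)
  left_inv z := WithLp.ofLp_injective 2 <|
    Prod.ext (lp.ext <| funext <| Nat.interleave_two_mul _ _)
      (lp.ext <| funext <| Nat.interleave_two_mul_add_one _ _)
  right_inv x := by
    ext n
    obtain ⟨k, rfl | rfl⟩ := Nat.even_or_odd' n <;> simp
  norm_map' z := by
    have h2 : (0 : ℝ) < (2 : ℝ≥0∞).toReal := by simp
    refine Real.rpow_left_injOn h2.ne' (norm_nonneg _) (norm_nonneg _) <|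
      (hasSum_norm h2 _).unique ?_
    convert hasSum_norm_sq_interleave z.fst z.snd using 1
    · rfl
    simpa only [ENNReal.toReal_ofNat, Real.rpow_two] using WithLp.prod_norm_sq_eq_of_L2 z

end lp

namespace MeasureTheory

variable {α ι : Type*} [MeasurableSpace α] {μ : Measure α} {s : Set α}

theorem L2.real_inner_nonneg {f g : Lp ℝ 2 μ} (hf : 0 ≤ f) (hg : 0 ≤ g) : 0 ≤ ⟪f, g⟫_ℝ := by
  rw [L2.inner_def]
  refine integral_nonneg_of_ae ?_
  filter_upwards [(Lp.coeFn_nonneg f).2 hf, (Lp.coeFn_nonneg g).2 hg] with x hfx hgx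
  exact mul_nonneg hgx hfx

theorem Lp.smul_nonneg {p : ℝ≥0∞} {c : ℝ} (hc : 0 ≤ c) {f : Lp ℝ p μ} (hf : 0 ≤ f) :
    0 ≤ c • f := by
  rw [← Lp.coeFn_nonneg] at hf ⊢
  filter_upwards [Lp.coeFn_smul c f, hf] with x hx hfx
  rw [hx]
  exact mul_nonneg hc hfx

theorem indicatorConstLp_nonneg {p : ℝ≥0∞} (hs : MeasurableSet s) (hμs : μ s ≠ ∞) {c : ℝ}
    (hc : 0 ≤ c) : 0 ≤ indicatorConstLp p hs hμs c := by
  rw [← Lp.coeFn_nonneg]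
  filter_upwards [indicatorConstLp_coeFn (p := p) (hs := hs) (hμs := hμs) (c := c)] with x hx
  rw [hx]
  exact Set.indicator_nonneg (fun _ _ => hc) x

def normedIndicatorLp (hs : MeasurableSet s) (hμs : μ s ≠ ∞) : Lp ℝ 2 μ :=
  indicatorConstLp 2 hs hμs (√(μ.real s))⁻¹

theorem normedIndicatorLp_nonneg (hs : MeasurableSet s) (hμs : μ s ≠ ∞) :
    0 ≤ normedIndicatorLp hs hμs :=
  indicatorConstLp_nonneg hs hμs (by positivity)

theorem orthonormal_normedIndicatorLp {s : ι → Set α} (hs : ∀ i, MeasurableSet (s i))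
    (hμs : ∀ i, μ (s i) ≠ ∞) (hμs₀ : ∀ i, μ (s i) ≠ 0) (hd : Pairwise (Disjoint on s)) :
    Orthonormal ℝ fun i => normedIndicatorLp (hs i) (hμs i) := by
  classical
  rw [orthonormal_iff_ite]
  intro i j
  rw [normedIndicatorLp, normedIndicatorLp,
    L2.inner_indicatorConstLp_indicatorConstLp _ _ (hμs i) (hμs j)]
  split_ifs with hij
  · subst hij
    have : 0 < μ.real (s i) := ENNReal.toReal_pos (hμs₀ i) (hμs i)
    simp [Set.inter_self, this.ne']
  · simp [(hd hij).inter_eq]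

end MeasureTheory

section PositiveSynthesis

variable {α ι : Type*} [MeasurableSpace α] {μ : Measure α} {e : ι → Lp ℝ 2 μ}
  (he : Orthonormal ℝ e)

theorem Orthonormal.linearIsometry_nonneg (he₀ : ∀ i, 0 ≤ e i) {x : lp (fun _ : ι => ℝ) 2}
    (hx : 0 ≤ ⇑x) : 0 ≤ he.orthogonalFamily.linearIsometry x :=
  (he.orthogonalFamily.hasSum_linearIsometry x).nonneg fun i => Lp.smul_nonneg (hx i) (he₀ i)

theorem Orthonormal.adjoint_linearIsometry_apply [DecidableEq ι] (f : Lp ℝ 2 μ) (i : ι) :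
    adjoint he.orthogonalFamily.linearIsometry.toContinuousLinearMap f i = ⟪e i, f⟫_ℝ :=
  calc adjoint he.orthogonalFamily.linearIsometry.toContinuousLinearMap f i
      = ⟪lp.single 2 i (1 : ℝ),
          adjoint he.orthogonalFamily.linearIsometry.toContinuousLinearMap f⟫_ℝ := by
        simp [lp.inner_single_left]
    _ = ⟪e i, f⟫_ℝ := by simp [adjoint_inner_right]

theorem Orthonormal.adjoint_linearIsometry_nonneg (he₀ : ∀ i, 0 ≤ e i) {f : Lp ℝ 2 μ}
    (hf : 0 ≤ f) : 0 ≤ ⇑(adjoint he.orthogonalFamily.linearIsometry.toContinuousLinearMap f) := by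
  classical
  intro i
  rw [Pi.zero_apply, he.adjoint_linearIsometry_apply]
  exact L2.real_inner_nonneg (he₀ i) hf

end PositiveSynthesis

theorem Orthonormal.snd_bandShift_interleave_nonneg {α : Type*} [MeasurableSpace α]
    {μ : Measure α} {e : ℕ → Lp ℝ 2 μ} (he : Orthonormal ℝ e)
    (he₀ : ∀ i, 0 ≤ e i) {z : WithLp 2 (lp (fun _ : ℕ => ℝ) 2 × Lp ℝ 2 μ)} (hz₁ : 0 ≤ ⇑z.fst)
    (hz₂ : 0 ≤ z.snd) :
    0 ≤ (bandShift he.orthogonalFamily.linearIsometry.toContinuousLinearMap lp.interleave z).snd :=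
  he.linearIsometry_nonneg he₀ <|
    Nat.interleave_nonneg hz₁ (he.adjoint_linearIsometry_nonneg he₀ hz₂)

def dyadicPiece (n : ℕ) : Set (Set.Icc (0 : ℝ) 1) :=
  Subtype.val ⁻¹' Set.Ioc (1 - (1 / 2) ^ n) (1 - (1 / 2) ^ (n + 1))

theorem measurableSet_dyadicPiece (n : ℕ) : MeasurableSet (dyadicPiece n) :=
  measurable_subtype_coe measurableSet_Ioc

theorem pairwise_disjoint_dyadicPiece : Pairwise (Disjoint on dyadicPiece) := by
  have hmono : Monotone fun n : ℕ => 1 - (1 / 2 : ℝ) ^ n := fun m n hmn =>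
    sub_le_sub_left (pow_le_pow_of_le_one (by norm_num) (by norm_num) hmn) 1
  refine hmono.pairwise_disjoint_on_Ioc_succ.mono fun m n h => ?_
  simpa only [Function.onFun, dyadicPiece, Order.succ_eq_add_one] using
    h.preimage (Subtype.val : Set.Icc (0 : ℝ) 1 → ℝ)

theorem volume_dyadicPiece_ne_zero (n : ℕ) : volume (dyadicPiece n) ≠ 0 := by
  have hsub : Set.Ioc (1 - (1 / 2 : ℝ) ^ n) (1 - (1 / 2) ^ (n + 1)) ⊆ Set.Icc 0 1 :=
    Set.Ioc_subset_Icc_self.trans <|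
      Set.Icc_subset_Icc (by simp [inv_le_one_of_one_le₀, one_le_pow₀]) (by simp)
  rw [dyadicPiece, volume_set_coe_def, comap_subtype_coe_apply measurableSet_Icc,
    Subtype.image_preimage_coe, Set.inter_eq_right.2 hsub, Real.volume_Ioc]
  norm_num [pow_succ]

end

/-- On the Hilbert lattice `H = ℓ² ⊕₂ L²[0,1]`, the band projection `C(x, f) = (x, 0)` onto the
`ℓ²` component is a self-commutator of a positive operator. -/
theorem band_projection_onto_l2_component_is_selfCommutator
    (C : WithLp 2 ((lp (fun _ : ℕ => ℝ) 2) × (Lp ℝ 2 (volume : Measure (Set.Icc (0:ℝ) 1))))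
      →L[ℝ]
      WithLp 2 ((lp (fun _ : ℕ => ℝ) 2) × (Lp ℝ 2 (volume : Measure (Set.Icc (0:ℝ) 1)))))
    (hC : ∀ z, WithLp.equiv 2 _ (C z) = ((WithLp.equiv 2 _ z).1, 0)) :
    ∃ A : WithLp 2 ((lp (fun _ : ℕ => ℝ) 2) × (Lp ℝ 2 (volume : Measure (Set.Icc (0:ℝ) 1))))
      →L[ℝ]
      WithLp 2 ((lp (fun _ : ℕ => ℝ) 2) × (Lp ℝ 2 (volume : Measure (Set.Icc (0:ℝ) 1)))),
      (∀ z, IsPosPairL2 z → IsPosPairL2 (A z)) ∧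
      C = adjoint A ∘L A - A ∘L adjoint A := by
  have he := orthonormal_normedIndicatorLp measurableSet_dyadicPiece
    (fun _ => measure_ne_top _ _) volume_dyadicPiece_ne_zero
    pairwise_disjoint_dyadicPiece
  set Φ := he.orthogonalFamily.linearIsometry
  refine ⟨bandShift Φ.toContinuousLinearMap lp.interleave, fun z hz => ⟨fun _ => le_rfl, ?_⟩, ?_⟩
  · exact he.snd_bandShift_interleave_nonneg (fun _ => normedIndicatorLp_nonneg _ _) hz.1 hz.2
  · ext z : 1
    refine WithLp.ofLp_injective 2 ?_
    rw [adjoint_comp_bandShift_sub_bandShift_comp_adjoint_apply _ _ Φ.adjoint_comp_self]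
    exact hC z
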